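/- (Trilinear estimate for R_3) Let s > 1/2. Then for every t ∈ ℝ the trilinear operator R_3 maps (Ḣ^s)³ into Ḣ^s and satisfies ‖R_3(φ,ψ,ξ)‖_{Ḣ^s} ≤ C(s) ‖φ‖_{Ḣ^s} ‖ψ‖_{Ḣ^s} ‖ξ‖_{Ḣ^s}, with a constant C(s) independent of t. -/

import Mathlib

open MeasureTheory Set

noncomputable section

/-- The weight `|k|^(2s)` appearing in the `Ḣ^s` norm. -/
def wt (s : ℝ) (k : ℤ) : ℝ := ((|k| : ℤ) : ℝ) ^ (2 * s)

/-- Membership in the homogeneous Sobolev space `Ḣ^s` of sequences indexed by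
nonzero integers. -/
def memH (s : ℝ) (u : ℤ → ℂ) : Prop :=
  Summable (fun k : {k : ℤ // k ≠ 0} => wt s k.1 * ‖u k.1‖ ^ 2)

/-- The `Ḣ^s` norm. -/
def hnorm (s : ℝ) (u : ℤ → ℂ) : ℝ :=
  Real.sqrt (∑' k : {k : ℤ // k ≠ 0}, wt s k.1 * ‖u k.1‖ ^ 2)

/-- The `(Ḣ^s)²` norm of a pair. -/
def hnorm2 (s : ℝ) (u v : ℤ → ℂ) : ℝ :=
  Real.sqrt (hnorm s u ^ 2 + hnorm s v ^ 2)

/-- The conserved energy functional `𝓔(u,v) = 2‖u‖² + 2‖v‖² + ‖u-v‖²` (in `Ḣ^0`). -/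
def energyE (u v : ℤ → ℂ) : ℝ :=
  2 * hnorm 0 u ^ 2 + 2 * hnorm 0 v ^ 2 + hnorm 0 (fun k => u k - v k) ^ 2

/-- Projection `𝒫` onto the low Fourier modes `|k| ≤ N`. -/
def Plow (N : ℕ) (u : ℤ → ℂ) : ℤ → ℂ := fun k => if |k| ≤ (N : ℤ) then u k else 0

/-- Projection `𝒬 = I - 𝒫` onto the high Fourier modes `|k| > N`. -/
def Qhigh (N : ℕ) (u : ℤ → ℂ) : ℤ → ℂ := fun k => if |k| ≤ (N : ℤ) then 0 else u k

/-- The oscillating factor `e^{3 i k k₁ k₂ t}` with `k₂ = k - k₁`. -/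
def osc2 (t : ℝ) (k k1 : ℤ) : ℂ :=
  Complex.exp (3 * Complex.I * (k : ℂ) * (k1 : ℂ) * ((k - k1 : ℤ) : ℂ) * (t : ℂ))

/-- The oscillating factor `e^{3 i (k₁+k₂)(k₂+k₃)(k₁+k₃) t}`. -/
def osc3 (t : ℝ) (k1 k2 k3 : ℤ) : ℂ :=
  Complex.exp (3 * Complex.I * ((k1 + k2 : ℤ) : ℂ) * ((k2 + k3 : ℤ) : ℂ) *
    ((k1 + k3 : ℤ) : ℂ) * (t : ℂ))

/-- The bilinear operator `B₁` at time `t`. -/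
def B1 (t : ℝ) (φ ψ : ℤ → ℂ) : ℤ → ℂ := fun k =>
  Complex.I * (k : ℂ) / 2 *
    ∑' k1 : ℤ, if k1 ≠ 0 ∧ k - k1 ≠ 0 then osc2 t k k1 * φ k1 * ψ (k - k1) else 0

/-- The bilinear operator `B₂` at time `t`. -/
def B2 (t : ℝ) (φ ψ : ℤ → ℂ) : ℤ → ℂ := fun k =>
  (1 / 6 : ℂ) *
    ∑' k1 : ℤ, if k1 ≠ 0 ∧ k - k1 ≠ 0 then
      osc2 t k k1 * φ k1 * ψ (k - k1) / ((k1 : ℂ) * ((k - k1 : ℤ) : ℂ)) else 0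

/-- The trilinear operator `R₃` at time `t`. -/
def R3 (t : ℝ) (φ ψ ξ : ℤ → ℂ) : ℤ → ℂ := fun k =>
  ∑' p : ℤ × ℤ,
    if p.1 ≠ 0 ∧ p.2 ≠ 0 ∧ k - p.1 - p.2 ≠ 0 then
      osc3 t p.1 p.2 (k - p.1 - p.2) * φ p.1 * ψ p.2 * ξ (k - p.1 - p.2) / (p.1 : ℂ)
    else 0

/-- The resonant part `R₃res` (sum over `(k₁+k₂)(k₂+k₃)(k₁+k₃) = 0`). -/
def R3res (φ ψ ξ : ℤ → ℂ) : ℤ → ℂ := fun k =>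
  ∑' p : ℤ × ℤ,
    if p.1 ≠ 0 ∧ p.2 ≠ 0 ∧ k - p.1 - p.2 ≠ 0 ∧
        (p.1 + p.2) * (p.2 + (k - p.1 - p.2)) * (p.1 + (k - p.1 - p.2)) = 0 then
      φ p.1 * ψ p.2 * ξ (k - p.1 - p.2) / (p.1 : ℂ)
    else 0

/-- The nonresonant part `R₃nres` (sum over `(k₁+k₂)(k₂+k₃)(k₁+k₃) ≠ 0`). -/
def R3nres (t : ℝ) (φ ψ ξ : ℤ → ℂ) : ℤ → ℂ := fun k =>
  ∑' p : ℤ × ℤ,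
    if p.1 ≠ 0 ∧ p.2 ≠ 0 ∧ k - p.1 - p.2 ≠ 0 ∧
        (p.1 + p.2) * (p.2 + (k - p.1 - p.2)) * (p.1 + (k - p.1 - p.2)) ≠ 0 then
      osc3 t p.1 p.2 (k - p.1 - p.2) * φ p.1 * ψ p.2 * ξ (k - p.1 - p.2) / (p.1 : ℂ)
    else 0

/-- The operator `R₃nres1(φ,ψ,ξ) = R₃nres(φ,𝒫ψ,ξ) + R₃nres(φ,𝒬ψ,𝒫ξ)`. -/
def R3nres1 (N : ℕ) (t : ℝ) (φ ψ ξ : ℤ → ℂ) : ℤ → ℂ := fun k =>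
  R3nres t φ (Plow N ψ) ξ k + R3nres t φ (Qhigh N ψ) (Plow N ξ) k

/-- The trilinear operator `B₃` (nonresonant indices). -/
def B3 (t : ℝ) (φ ψ ξ : ℤ → ℂ) : ℤ → ℂ := fun k =>
  ∑' p : ℤ × ℤ,
    if p.1 ≠ 0 ∧ p.2 ≠ 0 ∧ k - p.1 - p.2 ≠ 0 ∧
        (p.1 + p.2) * (p.2 + (k - p.1 - p.2)) * (p.1 + (k - p.1 - p.2)) ≠ 0 then
      osc3 t p.1 p.2 (k - p.1 - p.2) * φ p.1 * ψ p.2 * ξ (k - p.1 - p.2) /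
        ((p.1 : ℂ) * ((p.1 + p.2 : ℤ) : ℂ) * ((p.2 + (k - p.1 - p.2) : ℤ) : ℂ) *
          ((p.1 + (k - p.1 - p.2) : ℤ) : ℂ))
    else 0

/-- The operator `B₃₀(φ,ψ,ξ) = B₃(φ,𝒬ψ,𝒬ξ)`. -/
def B30 (N : ℕ) (t : ℝ) (φ ψ ξ : ℤ → ℂ) : ℤ → ℂ :=
  B3 t φ (Qhigh N ψ) (Qhigh N ξ)

/-- The phase `Φ(k₁,k₂,k₃,k₄) = (k₁+k₂+k₃+k₄)³ - k₁³ - k₂³ - k₃³ - k₄³`. -/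
def Phi4 (k1 k2 k3 k4 : ℤ) : ℤ :=
  (k1 + k2 + k3 + k4) ^ 3 - k1 ^ 3 - k2 ^ 3 - k3 ^ 3 - k4 ^ 3

/-- The oscillating factor `e^{i Φ(k₁,k₂,k₃,k₄) t}`. -/
def osc4 (t : ℝ) (k1 k2 k3 k4 : ℤ) : ℂ :=
  Complex.exp (Complex.I * ((Phi4 k1 k2 k3 k4 : ℤ) : ℂ) * (t : ℂ))

/-- The quadrilinear operator `B₄¹`. -/
def B41 (t : ℝ) (φ ψ ξ η : ℤ → ℂ) : ℤ → ℂ := fun k =>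
  ∑' q : ℤ × ℤ × ℤ,
    let k1 := q.1; let k2 := q.2.1; let k3 := q.2.2; let k4 := k - k1 - k2 - k3
    if k1 ≠ 0 ∧ k2 ≠ 0 ∧ k3 ≠ 0 ∧ k4 ≠ 0 ∧
        (k1 + k2) * (k1 + k3 + k4) * (k2 + k3 + k4) ≠ 0 then
      osc4 t k1 k2 k3 k4 * φ k1 * ψ k2 * ξ k3 * η k4 /
        (((k1 + k2 : ℤ) : ℂ) * ((k1 + k3 + k4 : ℤ) : ℂ) * ((k2 + k3 + k4 : ℤ) : ℂ))
    else 0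

/-- The quadrilinear operator `B₄²`. -/
def B42 (t : ℝ) (φ ψ ξ η : ℤ → ℂ) : ℤ → ℂ := fun k =>
  ∑' q : ℤ × ℤ × ℤ,
    let k1 := q.1; let k2 := q.2.1; let k3 := q.2.2; let k4 := k - k1 - k2 - k3
    if k1 ≠ 0 ∧ k2 ≠ 0 ∧ k3 ≠ 0 ∧ k4 ≠ 0 ∧
        (k1 + k2) * (k1 + k3 + k4) * (k2 + k3 + k4) ≠ 0 then
      osc4 t k1 k2 k3 k4 * ((k3 + k4 : ℤ) : ℂ) * φ k1 * ψ k2 * ξ k3 * η k4 /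
        ((k1 : ℂ) * ((k1 + k2 : ℤ) : ℂ) * ((k1 + k3 + k4 : ℤ) : ℂ) *
          ((k2 + k3 + k4 : ℤ) : ℂ))
    else 0

/-- The quadrilinear operator `B₄ = B₄¹ + B₄²`. -/
def B4 (t : ℝ) (φ ψ ξ η : ℤ → ℂ) : ℤ → ℂ := fun k =>
  B41 t φ ψ ξ η k + B42 t φ ψ ξ η k

/-- Right-hand side (before the `ik/2` factor and integration) of the `u`-equation
of the transformed Majda–Biello system. -/
def mbRHSu (u v : ℝ → ℤ → ℂ) (τ : ℝ) (k : ℤ) : ℂ :=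
  ∑' k1 : ℤ, if k1 ≠ 0 ∧ k - k1 ≠ 0 then
    osc2 τ k k1 * (u τ k1 * v τ (k - k1) - u τ k1 * u τ (k - k1)) else 0

/-- Right-hand side (before the `ik/2` factor and integration) of the `v`-equation
of the transformed Majda–Biello system. -/
def mbRHSv (u v : ℝ → ℤ → ℂ) (τ : ℝ) (k : ℤ) : ℂ :=
  ∑' k1 : ℤ, if k1 ≠ 0 ∧ k - k1 ≠ 0 then
    osc2 τ k k1 * (u τ k1 * v τ (k - k1) - v τ k1 * v τ (k - k1)) else 0

/-- `(u,v)` is a solution of the transformed Majda–Biello system on `[0,T]`: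
it belongs to `L^∞([0,T];(Ḣ^0)²)` and satisfies the integrated equations. -/
def IsMBSolution (T : ℝ) (u v : ℝ → ℤ → ℂ) : Prop :=
  (∃ M : ℝ, ∀ t ∈ Icc (0 : ℝ) T,
      memH 0 (u t) ∧ memH 0 (v t) ∧ hnorm2 0 (u t) (v t) ≤ M) ∧
  ∀ k : ℤ, k ≠ 0 → ∀ t ∈ Icc (0 : ℝ) T,
    (u t k - u 0 k = Complex.I * (k : ℂ) / 2 * (∫ τ in (0 : ℝ)..t, mbRHSu u v τ k)) ∧
    (v t k - v 0 k = Complex.I * (k : ℂ) / 2 * (∫ τ in (0 : ℝ)..t, mbRHSv u v τ k))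

/-- The (finite) right-hand side of the `u`-equation of the `N`-th Galerkin system. -/
def galRHSu (N : ℕ) (t : ℝ) (f g : ℤ → ℂ) (k : ℤ) : ℂ :=
  Complex.I * (k : ℂ) / 2 * ∑ k1 ∈ Finset.Icc (-(N : ℤ)) (N : ℤ),
    (if k1 ≠ 0 ∧ k - k1 ≠ 0 ∧ |k - k1| ≤ (N : ℤ) then
      osc2 t k k1 * (f k1 * g (k - k1) - f k1 * f (k - k1)) else 0)

/-- The (finite) right-hand side of the `v`-equation of the `N`-th Galerkin system. -/
def galRHSv (N : ℕ) (t : ℝ) (f g : ℤ → ℂ) (k : ℤ) : ℂ :=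
  Complex.I * (k : ℂ) / 2 * ∑ k1 ∈ Finset.Icc (-(N : ℤ)) (N : ℤ),
    (if k1 ≠ 0 ∧ k - k1 ≠ 0 ∧ |k - k1| ≤ (N : ℤ) then
      osc2 t k k1 * (f k1 * g (k - k1) - g k1 * g (k - k1)) else 0)

/-- `(u,v)` solves the `N`-th Galerkin system on the set `S` with initial data
`(uin, vin)`. -/
def IsGalerkinSolution (N : ℕ) (uin vin : ℤ → ℂ) (S : Set ℝ) (u v : ℝ → ℤ → ℂ) : Prop :=
  (∀ k : ℤ, k ≠ 0 → u 0 k = uin k ∧ v 0 k = vin k) ∧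
  ∀ t ∈ S, ∀ k : ℤ, k ≠ 0 →
    HasDerivWithinAt (fun τ : ℝ => u τ k)
      (if |k| ≤ (N : ℤ) then galRHSu N t (u t) (v t) k else 0) S t ∧
    HasDerivWithinAt (fun τ : ℝ => v τ k)
      (if |k| ≤ (N : ℤ) then galRHSv N t (u t) (v t) k else 0) S t

/-!
The phase `osc3` is unimodular and `|k₁| ≥ 1`, so `|R₃(φ,ψ,ξ)_k|` is bounded by the iterated
convolution `(a ⋆ (b ⋆ c))(k)` of the moduli `a, b, c` of the nonzero Fourier coefficients: the
estimate is the algebra property of `Ḣ^s` for `s > 1/2`.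

Since `|k₁ + k₂|^s ≤ C (|k₁|^s + |k₂|^s)`, the weight `|k|^s` can be moved onto one factor of a
convolution at a time. Each resulting term is bounded by Young's inequality
`‖f ⋆ g‖₂ ≤ ‖f‖₂ ‖g‖₁`, with the weighted factor in `ℓ²` and the others in `ℓ¹`, and for `s > 1/2`
Cauchy–Schwarz against `∑ |k|^(-2s) < ∞` bounds the `ℓ¹` norm by the `Ḣ^s` norm. All sums are
taken in `ℝ≥0∞`, so summability only has to be checked at the very end.
-/

open scoped ENNReal NNReal

namespace ENNReal

lemma add_sq_le_two_mul (a b : ℝ≥0∞) : (a + b) ^ 2 ≤ 2 * (a ^ 2 + b ^ 2) := by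
  rcases eq_or_ne a ⊤ with rfl | ha
  · simp
  rcases eq_or_ne b ⊤ with rfl | hb
  · simp
  lift a to ℝ≥0 using ha
  lift b to ℝ≥0 using hb
  exact_mod_cast add_sq_le (a := a) (b := b)

lemma sum_sq_le_sum_mul_sum_of_sq_le_mul {ι : Type*} (t : Finset ι) {r f g : ι → ℝ≥0∞}
    (h : ∀ i ∈ t, r i ^ 2 ≤ f i * g i) :
    (∑ i ∈ t, r i) ^ 2 ≤ (∑ i ∈ t, f i) * ∑ i ∈ t, g i := by
  by_cases hfg : (∑ i ∈ t, f i) * ∑ i ∈ t, g i = ⊤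
  · exact hfg ▸ le_top
  by_cases hzero : ∀ i ∈ t, f i * g i = 0
  · have hr : ∀ i ∈ t, r i = 0 := fun i hi => by simpa [hzero i hi] using h i hi
    simp [Finset.sum_eq_zero hr]
  push Not at hzero
  obtain ⟨j, hj, hfgj⟩ := hzero
  have hf : ∀ i ∈ t, f i ≠ ⊤ := ENNReal.sum_ne_top.1 fun hf => hfg <| by
    rw [hf, ENNReal.top_mul]
    exact fun h0 => right_ne_zero_of_mul hfgj (Finset.sum_eq_zero_iff.1 h0 j hj)
  have hg : ∀ i ∈ t, g i ≠ ⊤ := ENNReal.sum_ne_top.1 fun hg => hfg <| by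
    rw [hg, ENNReal.mul_top]
    exact fun h0 => left_ne_zero_of_mul hfgj (Finset.sum_eq_zero_iff.1 h0 j hj)
  have hr : ∀ i ∈ t, r i ≠ ⊤ := fun i hi hri => by
    have := h i hi
    rw [hri, ENNReal.top_pow two_ne_zero, top_le_iff] at this
    exact ENNReal.mul_ne_top (hf i hi) (hg i hi) this
  -- all terms are finite, so this is Cauchy–Schwarz in `ℝ≥0`
  have key := Finset.sum_sq_le_sum_mul_sum_of_sq_le_mul t (r := fun i => (r i).toNNReal)
    (f := fun i => (f i).toNNReal) (g := fun i => (g i).toNNReal) (fun _ _ => zero_le)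
    (fun _ _ => zero_le) fun i hi => by
      rw [← ENNReal.coe_le_coe]
      push_cast
      rw [coe_toNNReal (hr i hi), coe_toNNReal (hf i hi), coe_toNNReal (hg i hi)]
      exact h i hi
  rw [← ENNReal.coe_le_coe] at key
  push_cast at key
  rwa [Finset.sum_congr rfl fun i hi => coe_toNNReal (hr i hi),
    Finset.sum_congr rfl fun i hi => coe_toNNReal (hf i hi),
    Finset.sum_congr rfl fun i hi => coe_toNNReal (hg i hi)] at key

lemma tsum_sq_le_tsum_mul_tsum_of_sq_le_mul {ι : Type*} {r f g : ι → ℝ≥0∞}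
    (h : ∀ i, r i ^ 2 ≤ f i * g i) : (∑' i, r i) ^ 2 ≤ (∑' i, f i) * ∑' i, g i := by
  rw [ENNReal.tsum_eq_iSup_sum, ENNReal.iSup_pow]
  exact iSup_le fun t => (sum_sq_le_sum_mul_sum_of_sq_le_mul t fun i _ => h i).trans
    (mul_le_mul' (ENNReal.sum_le_tsum t) (ENNReal.sum_le_tsum t))

end ENNReal

lemma summable_iff_tsum_ofReal_ne_top {α : Type*} {f : α → ℝ} (hf : 0 ≤ f) :
    Summable f ↔ ∑' i, ENNReal.ofReal (f i) ≠ ⊤ :=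
  ⟨Summable.tsum_ofReal_ne_top, fun h => by
    simpa [ENNReal.toReal_ofReal (hf _)] using ENNReal.summable_toReal h⟩

lemma toReal_tsum_ofReal {α : Type*} {f : α → ℝ} (hf : 0 ≤ f) :
    (∑' i, ENNReal.ofReal (f i)).toReal = ∑' i, f i := by
  by_cases h : Summable f
  · rw [← ENNReal.ofReal_tsum_of_nonneg hf h, ENNReal.toReal_ofReal (tsum_nonneg hf)]
  · rw [tsum_eq_zero_of_not_summable h,
      not_ne_iff.1 (mt (summable_iff_tsum_ofReal_ne_top hf).2 h), ENNReal.toReal_top]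

lemma enorm_add_rpow_le {E : Type*} [TopologicalSpace E] [ESeminormedAddMonoid E] {s : ℝ}
    (hs : 0 ≤ s) (a b : E) :
    ‖a + b‖ₑ ^ s ≤ ENNReal.LpAddConst (ENNReal.ofReal s)⁻¹ * (‖a‖ₑ ^ s + ‖b‖ₑ ^ s) :=
  (ENNReal.rpow_le_rpow (enorm_add_le a b) hs).trans
    (ENNReal.rpow_add_le_mul_rpow_add_rpow' _ _ hs)

section Convolution

variable {G : Type*}

def weightedEnergy (ω f : G → ℝ≥0∞) : ℝ≥0∞ := ∑' k, (ω k * f k) ^ 2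

lemma weightedEnergy_mono (ω : G → ℝ≥0∞) {f g : G → ℝ≥0∞} (h : f ≤ g) :
    weightedEnergy ω f ≤ weightedEnergy ω g :=
  ENNReal.tsum_le_tsum fun k => by gcongr; exact h k

variable [AddCommGroup G]

def seqConv (f g : G → ℝ≥0∞) (k : G) : ℝ≥0∞ := ∑' j, f j * g (k - j)

lemma seqConv_comm (f g : G → ℝ≥0∞) : seqConv f g = seqConv g f := by
  ext k
  rw [seqConv, seqConv, ← (Equiv.subLeft k).tsum_eq]
  simp [mul_comm]

lemma seqConv_seqConv_apply (x y z : G → ℝ≥0∞) (k : G) :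
    seqConv x (seqConv y z) k = ∑' p : G × G, x p.1 * y p.2 * z (k - p.1 - p.2) := by
  rw [ENNReal.tsum_prod (f := fun a b => x a * y b * z (k - a - b))]
  simp_rw [seqConv, ← ENNReal.tsum_mul_left, mul_assoc]

lemma tsum_seqConv (f g : G → ℝ≥0∞) : ∑' k, seqConv f g k = (∑' k, f k) * ∑' k, g k := by
  calc ∑' k, ∑' j, f j * g (k - j) = ∑' j, ∑' k, f j * g (k - j) := ENNReal.tsum_comm
    _ = ∑' j, f j * ∑' k, g k := tsum_congr fun j => by
        rw [ENNReal.tsum_mul_left]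
        exact congrArg _ ((Equiv.subRight j).tsum_eq g)
    _ = _ := ENNReal.tsum_mul_right

lemma tsum_seqConv_sq_le (f g : G → ℝ≥0∞) :
    ∑' k, seqConv f g k ^ 2 ≤ (∑' k, f k ^ 2) * (∑' k, g k) ^ 2 := by
  have hpt : ∀ k, seqConv f g k ^ 2 ≤ seqConv (f ^ 2) g k * ∑' j, g j := fun k =>
    calc seqConv f g k ^ 2 ≤ seqConv (f ^ 2) g k * ∑' j, g (k - j) :=
          ENNReal.tsum_sq_le_tsum_mul_tsum_of_sq_le_mul fun j =>
            le_of_eq (by rw [Pi.pow_apply]; ring)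
      _ = seqConv (f ^ 2) g k * ∑' j, g j := congrArg _ ((Equiv.subLeft k).tsum_eq g)
  calc ∑' k, seqConv f g k ^ 2 ≤ ∑' k, seqConv (f ^ 2) g k * ∑' j, g j :=
        ENNReal.tsum_le_tsum hpt
    _ = (∑' k, f k ^ 2) * (∑' k, g k) ^ 2 := by
        rw [ENNReal.tsum_mul_right, tsum_seqConv]
        simp only [Pi.pow_apply]
        ring

lemma mul_seqConv_le {ω : G → ℝ≥0∞} {C : ℝ≥0∞} (hω : ∀ a b, ω (a + b) ≤ C * (ω a + ω b))
    (f g : G → ℝ≥0∞) (k : G) :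
    ω k * seqConv f g k ≤ C * (seqConv (ω * f) g k + seqConv f (ω * g) k) :=
  calc ω k * seqConv f g k = ∑' j, ω (j + (k - j)) * (f j * g (k - j)) := by
        rw [seqConv, ← ENNReal.tsum_mul_left]
        simp
    _ ≤ ∑' j, C * (ω j + ω (k - j)) * (f j * g (k - j)) :=
        ENNReal.tsum_le_tsum fun j => mul_le_mul_left (hω _ _) _
    _ = _ := by
        simp only [seqConv, Pi.mul_apply, ← ENNReal.tsum_add, ← ENNReal.tsum_mul_left]
        exact tsum_congr fun j => by ring

lemma weightedEnergy_seqConv_le {ω : G → ℝ≥0∞} {C : ℝ≥0∞}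
    (hω : ∀ a b, ω (a + b) ≤ C * (ω a + ω b)) (f g : G → ℝ≥0∞) :
    weightedEnergy ω (seqConv f g) ≤ 2 * C ^ 2 *
      (weightedEnergy ω f * (∑' k, g k) ^ 2 + (∑' k, f k) ^ 2 * weightedEnergy ω g) :=
  calc weightedEnergy ω (seqConv f g)
      ≤ ∑' k, 2 * C ^ 2 * (seqConv (ω * f) g k ^ 2 + seqConv f (ω * g) k ^ 2) :=
        ENNReal.tsum_le_tsum fun k => by
          calc (ω k * seqConv f g k) ^ 2
              ≤ (C * (seqConv (ω * f) g k + seqConv f (ω * g) k)) ^ 2 :=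
                pow_le_pow_left' (mul_seqConv_le hω f g k) 2
            _ ≤ C ^ 2 * (2 * (seqConv (ω * f) g k ^ 2 + seqConv f (ω * g) k ^ 2)) := by
                rw [mul_pow]
                gcongr
                exact ENNReal.add_sq_le_two_mul _ _
            _ = _ := by ring
    _ = 2 * C ^ 2 * (∑' k, seqConv (ω * f) g k ^ 2 + ∑' k, seqConv (ω * g) f k ^ 2) := by
        rw [ENNReal.tsum_mul_left, ENNReal.tsum_add, seqConv_comm f]
    _ ≤ _ := by
        gcongr
        · exact tsum_seqConv_sq_le _ _
        · exact (tsum_seqConv_sq_le _ _).trans_eq (mul_comm _ _)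

lemma weightedEnergy_seqConv_seqConv_le {ω : G → ℝ≥0∞} {C L : ℝ≥0∞}
    (hω : ∀ a b, ω (a + b) ≤ C * (ω a + ω b)) {a b c : G → ℝ≥0∞}
    (ha : (∑' k, a k) ^ 2 ≤ L * weightedEnergy ω a)
    (hb : (∑' k, b k) ^ 2 ≤ L * weightedEnergy ω b)
    (hc : (∑' k, c k) ^ 2 ≤ L * weightedEnergy ω c) :
    weightedEnergy ω (seqConv a (seqConv b c)) ≤ 2 * C ^ 2 * (1 + 4 * C ^ 2) * L ^ 2 *
      (weightedEnergy ω a * weightedEnergy ω b * weightedEnergy ω c) := by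
  set Ea := weightedEnergy ω a
  set Eb := weightedEnergy ω b
  set Ec := weightedEnergy ω c
  calc weightedEnergy ω (seqConv a (seqConv b c))
      ≤ 2 * C ^ 2 * (Ea * ((∑' k, b k) * ∑' k, c k) ^ 2 +
          (∑' k, a k) ^ 2 * (2 * C ^ 2 * (Eb * (∑' k, c k) ^ 2 + (∑' k, b k) ^ 2 * Ec))) := by
        grw [weightedEnergy_seqConv_le hω a, tsum_seqConv, weightedEnergy_seqConv_le hω b c]
    _ ≤ 2 * C ^ 2 * (Ea * ((L * Eb) * (L * Ec)) +
          (L * Ea) * (2 * C ^ 2 * (Eb * (L * Ec) + (L * Eb) * Ec))) := by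
        rw [mul_pow]
        gcongr
    _ = _ := by ring

end Convolution

def sobolevWeight (s : ℝ) (k : ℤ) : ℝ≥0∞ := ‖k‖ₑ ^ s

lemma sobolevWeight_eq_ofReal (s : ℝ) {k : ℤ} (hk : k ≠ 0) :
    sobolevWeight s k = ENNReal.ofReal (|(k : ℝ)| ^ s) := by
  rw [sobolevWeight, ← ofReal_norm, Int.norm_eq_abs,
    ENNReal.ofReal_rpow_of_pos (abs_pos.2 (Int.cast_ne_zero.2 hk))]

lemma sq_sobolevWeight (s : ℝ) {k : ℤ} (hk : k ≠ 0) :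
    sobolevWeight s k ^ 2 = ENNReal.ofReal (wt s k) := by
  rw [sobolevWeight_eq_ofReal s hk, ← ENNReal.ofReal_pow (by positivity), wt, Int.cast_abs,
    ← Real.rpow_natCast, ← Real.rpow_mul (abs_nonneg _), mul_comm s]
  norm_num

lemma sq_sobolevWeight_mul_ofReal_rpow_neg (s : ℝ) {k : ℤ} (hk : k ≠ 0) :
    sobolevWeight s k ^ 2 * ENNReal.ofReal (|(k : ℝ)| ^ (-(2 * s))) = 1 := by
  have hpos : 0 < |(k : ℝ)| := abs_pos.2 (Int.cast_ne_zero.2 hk)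
  rw [sobolevWeight_eq_ofReal s hk, ← ENNReal.ofReal_pow (by positivity),
    ← ENNReal.ofReal_mul (by positivity), ← Real.rpow_natCast, ← Real.rpow_mul hpos.le,
    ← Real.rpow_add hpos]
  simp [mul_comm s]

lemma exists_sq_tsum_le_weightedEnergy {s : ℝ} (hs : 1 / 2 < s) :
    ∃ L : ℝ≥0∞, L ≠ ⊤ ∧ ∀ a : ℤ → ℝ≥0∞, a 0 = 0 →
      (∑' k, a k) ^ 2 ≤ L * weightedEnergy (sobolevWeight s) a := by
  refine ⟨∑' k : ℤ, ENNReal.ofReal (|(k : ℝ)| ^ (-(2 * s))),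
    (Real.summable_abs_int_rpow (by linarith)).tsum_ofReal_ne_top, fun a ha => ?_⟩
  rw [mul_comm]
  refine ENNReal.tsum_sq_le_tsum_mul_tsum_of_sq_le_mul fun k => ?_
  rcases eq_or_ne k 0 with rfl | hk
  · simp [ha]
  · rw [mul_pow, mul_right_comm, sq_sobolevWeight_mul_ofReal_rpow_neg s hk, one_mul]

lemma exists_weightedEnergy_seqConv_seqConv_le {s : ℝ} (hs : 1 / 2 < s) :
    ∃ K : ℝ≥0∞, K ≠ ⊤ ∧ ∀ a b c : ℤ → ℝ≥0∞, a 0 = 0 → b 0 = 0 → c 0 = 0 →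
      weightedEnergy (sobolevWeight s) (seqConv a (seqConv b c)) ≤
        K * (weightedEnergy (sobolevWeight s) a * weightedEnergy (sobolevWeight s) b *
          weightedEnergy (sobolevWeight s) c) := by
  obtain ⟨L, hL, hl1⟩ := exists_sq_tsum_le_weightedEnergy hs
  set C := ENNReal.LpAddConst (ENNReal.ofReal s)⁻¹
  have hC : C ≠ ⊤ := (ENNReal.LpAddConst_lt_top _).ne
  exact ⟨2 * C ^ 2 * (1 + 4 * C ^ 2) * L ^ 2, by finiteness, fun a b c ha hb hc =>
    weightedEnergy_seqConv_seqConv_le (enorm_add_rpow_le (by linarith)) (hl1 a ha)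
      (hl1 b hb) (hl1 c hc)⟩

lemma wt_nonneg (s : ℝ) (k : ℤ) : 0 ≤ wt s k := Real.rpow_nonneg (by positivity) _

-- The zero mode is invisible to `Ḣ^s`; discarding it is what makes the `ℓ¹` bound available.
def coeffENorm (u : ℤ → ℂ) (k : ℤ) : ℝ≥0∞ := if k = 0 then 0 else ‖u k‖ₑ

lemma coeffENorm_zero (u : ℤ → ℂ) : coeffENorm u 0 = 0 := if_pos rfl

def sobolevEnergy (s : ℝ) (u : ℤ → ℂ) : ℝ≥0∞ := weightedEnergy (sobolevWeight s) (coeffENorm u)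

lemma sobolevEnergy_eq_tsum_ofReal (s : ℝ) (u : ℤ → ℂ) :
    sobolevEnergy s u = ∑' k : {k : ℤ // k ≠ 0}, ENNReal.ofReal (wt s k * ‖u k‖ ^ 2) := by
  have hsupp : Function.support (fun k => (sobolevWeight s k * coeffENorm u k) ^ 2) ⊆
      {k : ℤ | k ≠ 0} := by
    rintro k hk rfl
    simp [coeffENorm_zero] at hk
  rw [sobolevEnergy, weightedEnergy, ← tsum_subtype_eq_of_support_subset hsupp]
  refine tsum_congr fun k => ?_
  rw [coeffENorm, if_neg k.2, mul_pow, sq_sobolevWeight s k.2,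
    ENNReal.ofReal_mul (wt_nonneg s k), ENNReal.ofReal_pow (norm_nonneg _), ofReal_norm]

lemma memH_iff_sobolevEnergy_ne_top (s : ℝ) (u : ℤ → ℂ) :
    memH s u ↔ sobolevEnergy s u ≠ ⊤ := by
  rw [sobolevEnergy_eq_tsum_ofReal]
  exact summable_iff_tsum_ofReal_ne_top fun k => mul_nonneg (wt_nonneg s k.1) (sq_nonneg _)

lemma hnorm_eq_sqrt_toReal_sobolevEnergy (s : ℝ) (u : ℤ → ℂ) :
    hnorm s u = √(sobolevEnergy s u).toReal := by
  rw [sobolevEnergy_eq_tsum_ofReal,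
    toReal_tsum_ofReal fun k : {k : ℤ // k ≠ 0} => mul_nonneg (wt_nonneg s k) (sq_nonneg _), hnorm]

lemma norm_osc3 (t : ℝ) (k1 k2 k3 : ℤ) : ‖osc3 t k1 k2 k3‖ = 1 := by
  rw [osc3, show 3 * Complex.I * ((k1 + k2 : ℤ) : ℂ) * ((k2 + k3 : ℤ) : ℂ) *
      ((k1 + k3 : ℤ) : ℂ) * (t : ℂ) =
      ((3 * ((k1 : ℝ) + k2) * ((k2 : ℝ) + k3) * ((k1 : ℝ) + k3) * t : ℝ) : ℂ) * Complex.I by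
    push_cast; ring, Complex.norm_exp_ofReal_mul_I]

lemma enorm_R3_summand_le (t : ℝ) (φ ψ ξ : ℤ → ℂ) (k1 k2 k3 : ℤ) :
    ‖if k1 ≠ 0 ∧ k2 ≠ 0 ∧ k3 ≠ 0 then
        osc3 t k1 k2 k3 * φ k1 * ψ k2 * ξ k3 / (k1 : ℂ) else 0‖ₑ ≤
      coeffENorm φ k1 * coeffENorm ψ k2 * coeffENorm ξ k3 := by
  split_ifs with h
  · obtain ⟨h1, h2, h3⟩ := h
    simp only [coeffENorm, if_neg h1, if_neg h2, if_neg h3]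
    rw [← enorm_mul, ← enorm_mul, enorm_le_iff_norm_le, norm_div, norm_mul, norm_mul, norm_mul,
      norm_mul, norm_mul, norm_osc3, one_mul, Complex.norm_intCast]
    exact div_le_self (by positivity) (by exact_mod_cast Int.one_le_abs h1)
  · simp

lemma coeffENorm_R3_le (t : ℝ) (φ ψ ξ : ℤ → ℂ) :
    coeffENorm (R3 t φ ψ ξ) ≤
      seqConv (coeffENorm φ) (seqConv (coeffENorm ψ) (coeffENorm ξ)) := by
  intro k
  rw [seqConv_seqConv_apply]
  by_cases hk : k = 0
  · simp [hk, coeffENorm_zero]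
  rw [coeffENorm, if_neg hk, R3]
  exact enorm_tsum_le_tsum_enorm.trans
    (ENNReal.tsum_le_tsum fun p => enorm_R3_summand_le t φ ψ ξ _ _ _)

/-- Trilinear estimate for `R₃`. -/
theorem r3_trilinear_estimate (s : ℝ) (hs : 1 / 2 < s) :
    ∃ C : ℝ, ∀ t : ℝ, ∀ φ ψ ξ : ℤ → ℂ, memH s φ → memH s ψ → memH s ξ →
      memH s (R3 t φ ψ ξ) ∧
      hnorm s (R3 t φ ψ ξ) ≤ C * hnorm s φ * hnorm s ψ * hnorm s ξ := by
  obtain ⟨K, hK, hbound⟩ := exists_weightedEnergy_seqConv_seqConv_le hs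
  refine ⟨√K.toReal, fun t φ ψ ξ hφ hψ hξ => ?_⟩
  rw [memH_iff_sobolevEnergy_ne_top] at hφ hψ hξ ⊢
  simp only [hnorm_eq_sqrt_toReal_sobolevEnergy]
  have hR : sobolevEnergy s (R3 t φ ψ ξ) ≤
      K * (sobolevEnergy s φ * sobolevEnergy s ψ * sobolevEnergy s ξ) :=
    (weightedEnergy_mono _ (coeffENorm_R3_le t φ ψ ξ)).trans
      (hbound _ _ _ (coeffENorm_zero φ) (coeffENorm_zero ψ) (coeffENorm_zero ξ))
  refine ⟨ne_top_of_le_ne_top (by finiteness) hR, ?_⟩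
  calc √(sobolevEnergy s (R3 t φ ψ ξ)).toReal
      ≤ √(K * (sobolevEnergy s φ * sobolevEnergy s ψ * sobolevEnergy s ξ)).toReal :=
        Real.sqrt_le_sqrt (ENNReal.toReal_mono (by finiteness) hR)
    _ = _ := by
        simp only [ENNReal.toReal_mul, Real.sqrt_mul', Real.sqrt_mul, ENNReal.toReal_nonneg,
          mul_nonneg, mul_assoc]
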